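/- Let p be an odd prime, m ≥ 2, and α ∈ F_p with α ≠ 0. For every a ∈ F_{p^m} not lying in the prime subfield F_p and every β ∈ F_p, the number of d ∈ D(α) with Tr(a·d) = β equals p^{m-2}; i.e., every symbol of F_p occurs exactly p^{m-2} times in the codeword c(a). -/

import Mathlib

/-!
The map `d ↦ (Tr d, Tr (a d))` is `F_p`-linear `F_{p^m} → F_p²`. It is onto when `a ∉ F_p`:
otherwise `Tr (a d)` would be a multiple `c · Tr d`, so `Tr ((a - c) d) = 0` for all `d`, and
nondegeneracy of the trace form gives `a = c`. Hence each fiber has `p^m / p^2` elements, and for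
`α ≠ 0` the fiber over `(α, β)` is exactly the set counted, since it excludes `d = 0`.
-/

open Finset

lemma AddMonoidHom.card_fiber_mul_card_of_surjective {G M F : Type*} [AddGroup G] [Fintype G]
    [AddMonoid M] [Fintype M] [DecidableEq M] [FunLike F G M] [AddMonoidHomClass F G M]
    (f : F) (hf : Function.Surjective f) (y : M) :
    #{g | f g = y} * Fintype.card M = Fintype.card G := calc
  #{g | f g = y} * Fintype.card M = ∑ z : M, #{g | f g = z} := by
    rw [mul_comm, ← smul_eq_mul, ← card_univ, ← sum_const]
    exact sum_congr rfl fun z _ =>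
      card_fiber_eq_of_mem_range f (Set.mem_range.2 (hf y)) (Set.mem_range.2 (hf z))
  _ = Fintype.card G := (card_eq_sum_card_fiberwise fun _ _ => mem_univ _).symm

namespace Algebra

variable (K : Type*) {L : Type*} [Field K] [Field L] [Algebra K L] [FiniteDimensional K L]
  [Algebra.IsSeparable K L]

theorem exists_trace_eq_zero_trace_mul_ne_zero {a : L} (ha : a ∉ Set.range (algebraMap K L)) :
    ∃ k : L, trace K L k = 0 ∧ trace K L (a * k) ≠ 0 := by
  by_contra! h
  obtain ⟨e, he⟩ := trace_surjective K L 1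
  -- `d - Tr d • e` lies in the kernel of the trace.
  have hmul : ∀ d, trace K L (a * d) = trace K L d * trace K L (a * e) := fun d => by
    have := h (d - trace K L d • e) (by simp [he])
    rwa [mul_sub, map_sub, sub_eq_zero, mul_smul_comm, map_smul, smul_eq_mul] at this
  refine ha ⟨trace K L (a * e),
    (sub_eq_zero.1 <| (traceForm_nondegenerate K L).1 _ fun d => ?_).symm⟩
  rw [traceForm_apply, sub_mul, map_sub, hmul, algebraMap_eq_smul_one, smul_mul_assoc,
    one_mul, map_smul, smul_eq_mul, mul_comm, sub_self]

theorem surjective_trace_prod_trace_mul {a : L} (ha : a ∉ Set.range (algebraMap K L)) :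
    Function.Surjective ((trace K L).prod (trace K L ∘ₗ LinearMap.mulLeft K a)) := by
  obtain ⟨e, he⟩ := trace_surjective K L 1
  obtain ⟨k, hk, hak⟩ := exists_trace_eq_zero_trace_mul_ne_zero K ha
  rintro ⟨x, y⟩
  refine ⟨x • e + ((y - x * trace K L (a * e)) / trace K L (a * k)) • k, Prod.ext ?_ ?_⟩
  · simp [he, hk]
  · show trace K L (a * _) = y
    rw [mul_add, mul_smul_comm, mul_smul_comm, map_add, map_smul, map_smul, smul_eq_mul,
      smul_eq_mul, div_mul_cancel₀ _ hak]
    ring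

end Algebra

theorem composition_CDalpha_general
    (p : ℕ) [Fact p.Prime] (m : ℕ) (hm : 2 ≤ m)
    (F : Type*) [Field F] [Fintype F] [DecidableEq F] [Algebra (ZMod p) F]
    (hcard : Fintype.card F = p ^ m) (α : ZMod p) (hα : α ≠ 0)
    (a : F) (ha : a ∉ Set.range (algebraMap (ZMod p) F)) (β : ZMod p) :
    (Finset.univ.filter fun d : F =>
        (d ≠ 0 ∧ Algebra.trace (ZMod p) F d = α) ∧
          Algebra.trace (ZMod p) F (a * d) = β).card = p ^ (m - 2) := by
  set T := Algebra.trace (ZMod p) F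
  set L := T.prod (T ∘ₗ LinearMap.mulLeft (ZMod p) a)
  have hfiber := AddMonoidHom.card_fiber_mul_card_of_surjective L
    (Algebra.surjective_trace_prod_trace_mul _ ha) (α, β)
  have hfilter : univ.filter (fun d => (d ≠ 0 ∧ T d = α) ∧ T (a * d) = β) =
      univ.filter (fun d => L d = (α, β)) := by
    refine filter_congr fun d _ => ⟨fun ⟨⟨_, h₁⟩, h₂⟩ => Prod.ext h₁ h₂, fun h => ?_⟩
    obtain ⟨h₁, h₂⟩ := Prod.ext_iff.1 h
    exact ⟨⟨fun hd => hα (by simpa [hd] using h₁.symm), h₁⟩, h₂⟩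
  rw [hfilter]
  refine Nat.eq_of_mul_eq_mul_right (pow_pos (Fact.out : p.Prime).pos 2) ?_
  rw [Fintype.card_prod, ZMod.card, ← sq, hcard] at hfiber
  rw [hfiber, ← pow_add, Nat.sub_add_cancel hm]

/-- Let `p` be an odd prime, `m ≥ 2`, and `α ∈ F_p` nonzero. For every `a ∈ F_{p^m}` not in
the prime subfield and every `β ∈ F_p`, the number of `d ∈ D(α)` with `Tr(a·d) = β` equals
`p^(m-2)`. -/
theorem composition_CDalpha
    (p : ℕ) [Fact p.Prime] (hp2 : p ≠ 2) (m : ℕ) (hm : 2 ≤ m)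
    (F : Type*) [Field F] [Fintype F] [DecidableEq F] [Algebra (ZMod p) F]
    (hcard : Fintype.card F = p ^ m) (α : ZMod p) (hα : α ≠ 0)
    (a : F) (ha : a ∉ Set.range (algebraMap (ZMod p) F)) (β : ZMod p) :
    (Finset.univ.filter fun d : F =>
        (d ≠ 0 ∧ Algebra.trace (ZMod p) F d = α) ∧
          Algebra.trace (ZMod p) F (a * d) = β).card = p ^ (m - 2) :=
  composition_CDalpha_general p m hm F hcard α hα a ha β
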